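/- In $\mathfrak{so}(1,3)$ with the basis $e_a = \varepsilon E_{a4}$, $e_{ab}=E_{ab}$ as above, the subspace $\mathfrak{p} = \mathrm{span}\{e_1,\; e_2 + \varepsilon e_{12},\; e_3 + \varepsilon e_{13},\; e_{23}\}$ is a Lie subalgebra, and for the linear functional $\lambda = \lambda(j)$ with coordinates $(p_1,p_2,p_3,l_{12},l_{13},l_{23}) = (j_1, 0,0,0,0, j_2)$ one has $\langle\lambda, [\mathfrak{p},\mathfrak{p}]\rangle = 0$, i.e. $\lambda$ vanishes on all brackets of elements of $\mathfrak{p}$; moreover $\dim\mathfrak{p} = 4 = \dim\mathfrak{so}(1,3) - \tfrac12\cdot 4$ (so $\mathfrak{p}$ is a real polarization of $\lambda$ for the 4-dimensional coadjoint orbits). -/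

import Mathlib

/-!
The generators `g₁ = e₁`, `g₂ = e₂ + ε e₁₂`, `g₃ = e₃ + ε e₁₃`, `g₄ = e₂₃` satisfy
`[g₁, g₂] = ε g₂`, `[g₁, g₃] = ε g₃`, `[g₂, g₄] = -g₃`, `[g₃, g₄] = g₂` and
`[g₁, g₄] = [g₂, g₃] = 0` (in `[g₂, g₃]` the terms `ε² e₂₃` cancel). Hence `[𝔭, 𝔭]` lies in
`span {g₂, g₃}`, which is inside `𝔭` and on which `λ` vanishes because `λ` only sees `e₁` and
`e₂₃`. The generators are unitriangular combinations of `e₁, e₂, e₃, e₁₂, e₁₃, e₂₃`, so they are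
linearly independent.
-/

open Submodule

theorem lie_mem_of_mem_span {R L : Type*} [CommRing R] [LieRing L] [LieAlgebra R L]
    {S : Set L} {N : Submodule R L} (h : ∀ a ∈ S, ∀ b ∈ S, ⁅a, b⁆ ∈ N) {x y : L}
    (hx : x ∈ span R S) (hy : y ∈ span R S) : ⁅x, y⁆ ∈ N := by
  have hle :
      map₂ (LieModule.toEnd R L L : L →ₗ[R] Module.End R L) (span R S) (span R S) ≤ N := by
    rw [map₂_span_span, span_le]
    rintro _ ⟨a, ha, b, hb, rfl⟩
    exact h a ha b hb
  exact hle (apply_mem_map₂ _ hx hy)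

theorem lie_add_smul_eq_smul_of_lie_eq {R L : Type*} [CommRing R] [LieRing L] [LieAlgebra R L]
    {x y z : L} {c : R} (hxy : ⁅x, y⁆ = c ^ 2 • z) (hzx : ⁅z, x⁆ = -y) :
    ⁅x, y + c • z⁆ = c • (y + c • z) := by
  rw [lie_add, lie_smul, hxy, ← lie_skew, hzx, neg_neg]
  module

section PolarizationGenerators

variable {R M : Type*} [CommRing R] [AddCommGroup M] [Module R M]

def polarizationGenerators (c : R) (u w : Fin 3 → M) : Set M :=
  {u 0, u 1 + c • w 0, u 2 + c • w 1, w 2}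

theorem linearIndependent_polarizationGenerators (c : R) {u w : Fin 3 → M}
    (huw : LinearIndependent R (Sum.elim u w)) :
    LinearIndependent R ![u 0, u 1 + c • w 0, u 2 + c • w 1, w 2] := by
  rw [Fintype.linearIndependent_iff]
  intro a ha
  have key := Fintype.linearIndependent_iff.mp huw
    (Sum.elim ![a 0, a 1, a 2] ![c * a 1, c * a 2, a 3]) (by
      simp only [Fintype.sum_sum_type, Fin.sum_univ_three, Sum.elim_inl, Sum.elim_inr]
      simp only [Fin.sum_univ_four, Matrix.cons_val] at ha
      simp only [Matrix.cons_val]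
      linear_combination (norm := module) ha)
  intro i
  fin_cases i
  · simpa using key (.inl 0)
  · simpa using key (.inl 1)
  · simpa using key (.inl 2)
  · simpa using key (.inr 2)

theorem finrank_span_polarizationGenerators [Nontrivial R] (c : R) {u w : Fin 3 → M}
    (huw : LinearIndependent R (Sum.elim u w)) :
    Module.finrank R (span R (polarizationGenerators c u w)) = 4 := by
  have hrange : Set.range ![u 0, u 1 + c • w 0, u 2 + c • w 1, w 2] =
      polarizationGenerators c u w := by
    simp only [polarizationGenerators, Matrix.range_cons, Matrix.range_empty, Set.union_empty,
      Set.singleton_union]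
  rw [← hrange, finrank_span_eq_card (linearIndependent_polarizationGenerators c huw),
    Fintype.card_fin]

end PolarizationGenerators

theorem lie_polarizationGenerators_mem_span {R L : Type*} [CommRing R] [LieRing L]
    [LieAlgebra R L] (ε : R) (u w : Fin 3 → L)
    (huu1 : ⁅u 0, u 1⁆ = ε ^ 2 • w 0)
    (huu2 : ⁅u 0, u 2⁆ = ε ^ 2 • w 1)
    (huu3 : ⁅u 1, u 2⁆ = ε ^ 2 • w 2)
    (hw1u1 : ⁅w 0, u 0⁆ = -u 1) (hw1u3 : ⁅w 0, u 2⁆ = 0)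
    (hw2u1 : ⁅w 1, u 0⁆ = -u 2) (hw2u2 : ⁅w 1, u 1⁆ = 0)
    (hw3u1 : ⁅w 2, u 0⁆ = 0) (hw3u2 : ⁅w 2, u 1⁆ = u 2) (hw3u3 : ⁅w 2, u 2⁆ = -u 1)
    (hww1 : ⁅w 0, w 1⁆ = -w 2) (hww2 : ⁅w 0, w 2⁆ = -w 1) (hww3 : ⁅w 1, w 2⁆ = w 0) :
    ∀ a ∈ polarizationGenerators ε u w, ∀ b ∈ polarizationGenerators ε u w,
      ⁅a, b⁆ ∈ span R {u 1 + ε • w 0, u 2 + ε • w 1} := by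
  set N := span R {u 1 + ε • w 0, u 2 + ε • w 1}
  have hg₂ : u 1 + ε • w 0 ∈ N := subset_span (by simp)
  have hg₃ : u 2 + ε • w 1 ∈ N := subset_span (by simp)
  have h₁₂ : ⁅u 0, u 1 + ε • w 0⁆ ∈ N := by
    rw [lie_add_smul_eq_smul_of_lie_eq huu1 hw1u1]
    exact N.smul_mem ε hg₂
  have h₁₃ : ⁅u 0, u 2 + ε • w 1⁆ ∈ N := by
    rw [lie_add_smul_eq_smul_of_lie_eq huu2 hw2u1]
    exact N.smul_mem ε hg₃
  have h₁₄ : ⁅u 0, w 2⁆ ∈ N := by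
    rw [← lie_skew, hw3u1, neg_zero]
    exact N.zero_mem
  have h₂₃ : ⁅u 1 + ε • w 0, u 2 + ε • w 1⁆ ∈ N := by
    rw [add_lie, lie_add, lie_add, lie_smul, lie_smul, smul_lie, smul_lie, huu3, ← lie_skew,
      hw2u2, hw1u3, hww1]
    convert N.zero_mem using 1
    module
  have h₂₄ : ⁅u 1 + ε • w 0, w 2⁆ ∈ N := by
    rw [add_lie, smul_lie, ← lie_skew, hw3u2, hww2]
    convert N.neg_mem hg₃ using 1
    module
  have h₃₄ : ⁅u 2 + ε • w 1, w 2⁆ ∈ N := by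
    rw [add_lie, smul_lie, ← lie_skew, hw3u3, hww3, neg_neg]
    exact hg₂
  intro a ha b hb
  rcases ha with rfl | rfl | rfl | rfl <;> rcases hb with rfl | rfl | rfl | rfl <;>
    first
      | (rw [lie_self]; exact N.zero_mem)
      | assumption
      | (rw [← lie_skew]; exact N.neg_mem ‹_›)

theorem so13_polarization {L : Type*} [LieRing L] [LieAlgebra ℝ L]
    (ε : ℝ)
    (u w : Fin 3 → L)
    (hLI : LinearIndependent ℝ (Sum.elim u w))
    (huu1 : ⁅u 0, u 1⁆ = ε ^ 2 • w 0)
    (huu2 : ⁅u 0, u 2⁆ = ε ^ 2 • w 1)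
    (huu3 : ⁅u 1, u 2⁆ = ε ^ 2 • w 2)
    (hw1u1 : ⁅w 0, u 0⁆ = -u 1) (hw1u3 : ⁅w 0, u 2⁆ = 0)
    (hw2u1 : ⁅w 1, u 0⁆ = -u 2) (hw2u2 : ⁅w 1, u 1⁆ = 0)
    (hw3u1 : ⁅w 2, u 0⁆ = 0) (hw3u2 : ⁅w 2, u 1⁆ = u 2) (hw3u3 : ⁅w 2, u 2⁆ = -u 1)
    (hww1 : ⁅w 0, w 1⁆ = -w 2) (hww2 : ⁅w 0, w 2⁆ = -w 1) (hww3 : ⁅w 1, w 2⁆ = w 0)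
    (lam : L →ₗ[ℝ] ℝ)
    (hlam2 : lam (u 1) = 0) (hlam3 : lam (u 2) = 0)
    (hlam4 : lam (w 0) = 0) (hlam5 : lam (w 1) = 0) :
    (∀ x ∈ Submodule.span ℝ ({u 0, u 1 + ε • w 0, u 2 + ε • w 1, w 2} : Set L),
     ∀ y ∈ Submodule.span ℝ ({u 0, u 1 + ε • w 0, u 2 + ε • w 1, w 2} : Set L),
      ⁅x, y⁆ ∈ Submodule.span ℝ ({u 0, u 1 + ε • w 0, u 2 + ε • w 1, w 2} : Set L)) ∧
    (∀ x ∈ Submodule.span ℝ ({u 0, u 1 + ε • w 0, u 2 + ε • w 1, w 2} : Set L),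
     ∀ y ∈ Submodule.span ℝ ({u 0, u 1 + ε • w 0, u 2 + ε • w 1, w 2} : Set L),
      lam ⁅x, y⁆ = 0) ∧
    Module.finrank ℝ
      (Submodule.span ℝ ({u 0, u 1 + ε • w 0, u 2 + ε • w 1, w 2} : Set L)) = 4 := by
  have hbracket := lie_polarizationGenerators_mem_span ε u w huu1 huu2 huu3 hw1u1 hw1u3
    hw2u1 hw2u2 hw3u1 hw3u2 hw3u3 hww1 hww2 hww3
  have hle_span :
      span ℝ {u 1 + ε • w 0, u 2 + ε • w 1} ≤ span ℝ (polarizationGenerators ε u w) :=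
    span_mono (by simp [polarizationGenerators, Set.insert_subset_iff])
  have hle_ker : span ℝ {u 1 + ε • w 0, u 2 + ε • w 1} ≤ LinearMap.ker lam := by
    simp [span_le, Set.insert_subset_iff, hlam2, hlam3, hlam4, hlam5]
  exact ⟨fun x hx y hy ↦ hle_span (lie_mem_of_mem_span hbracket hx hy),
    fun x hx y hy ↦ hle_ker (lie_mem_of_mem_span hbracket hx hy),
    finrank_span_polarizationGenerators ε hLI⟩
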